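/- Let p be an odd prime, m = 2p², and S = {2pi + (i² mod p) : 0 ≤ i ≤ p-1}. Let A_n = ⋃_{k=1}^{n} (2km + S). If a_1, a_2, a_3, a_4 ∈ A_n satisfy a_1 + a_2 = a_3 + a_4 and a_1·a_2 ≠ a_3·a_4, then |a_1·a_2 - a_3·a_4| ≥ 4p³. -/

import Mathlib

/-!
Write the elements of `A_n` as `4p²k + s` with `s ∈ S ⊆ [0, 2p²)`. Then `a₁ + a₂ = a₃ + a₄`
forces `s₁ + s₂ = s₃ + s₄`, and as `S` is a Sidon set we may assume `s₁ = s₃`, `s₂ = s₄`.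
Now `a₁a₂ - a₃a₄ = -(a₃ - a₁)(a₄ - a₁)`, where `a₃ - a₁` is a nonzero multiple of `4p²` and
`a₄ - a₁ = 4p²(k₄ - k₁) + (s₂ - s₁)` is nonzero, hence at least `p` in absolute value: either
`k₄ = k₁` and distinct elements of `S` are `p` apart, or `|s₂ - s₁| < 2p²` cannot cancel a
nonzero multiple of `4p²`. That `S` is Sidon comes from reading off `i + j` and `i² + j² mod p`
from the sum of two of its elements.
-/

def IsSidon {α : Type*} [Add α] (S : Set α) : Prop :=
  ∀ a ∈ S, ∀ b ∈ S, ∀ c ∈ S, ∀ d ∈ S, a + b = c + d → (a = c ∧ b = d) ∨ (a = d ∧ b = c)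

def blockUnion (M : ℤ) (S : Set ℤ) : Set ℤ :=
  {a | ∃ k : ℤ, ∃ s ∈ S, a = M * k + s}

lemma le_abs_mul_of_ne_zero (M : ℤ) {k : ℤ} (hk : k ≠ 0) : M ≤ |M * k| := by
  rw [abs_mul]
  exact (le_abs_self M).trans (le_mul_of_one_le_right (abs_nonneg M) (Int.one_le_abs hk))

lemma mul_sub_mul_eq_neg_mul_of_add_eq_add {R : Type*} [CommRing R] {a₁ a₂ a₃ a₄ : R}
    (h : a₁ + a₂ = a₃ + a₄) : a₁ * a₂ - a₃ * a₄ = -((a₃ - a₁) * (a₄ - a₁)) := by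
  linear_combination a₁ * h

section Blocks

variable {S : Set ℤ} {M B d : ℤ}

lemma abs_sub_lt_of_mem (hSB : ∀ s ∈ S, 0 ≤ s ∧ s < B) {s t : ℤ} (hs : s ∈ S) (ht : t ∈ S) :
    |s - t| < B := by
  obtain ⟨hs₀, hsB⟩ := hSB s hs
  obtain ⟨ht₀, htB⟩ := hSB t ht
  rw [abs_sub_lt_iff]
  constructor <;> linarith

lemma add_eq_add_of_mul_add_eq (hSB : ∀ s ∈ S, 0 ≤ s ∧ s < B) (hBM : 2 * B ≤ M)
    {k₁ k₂ k₃ k₄ s₁ s₂ s₃ s₄ : ℤ} (hs₁ : s₁ ∈ S) (hs₂ : s₂ ∈ S) (hs₃ : s₃ ∈ S) (hs₄ : s₄ ∈ S)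
    (h : M * k₁ + s₁ + (M * k₂ + s₂) = M * k₃ + s₃ + (M * k₄ + s₄)) :
    s₁ + s₂ = s₃ + s₄ := by
  have hdvd : M ∣ s₁ + s₂ - (s₃ + s₄) := ⟨k₃ + k₄ - k₁ - k₂, by linear_combination h⟩
  have hlt : |s₁ + s₂ - (s₃ + s₄)| < M :=
    calc |s₁ + s₂ - (s₃ + s₄)| = |(s₁ - s₃) + (s₂ - s₄)| := by ring_nf
      _ ≤ |s₁ - s₃| + |s₂ - s₄| := abs_add_le _ _
      _ < B + B := add_lt_add (abs_sub_lt_of_mem hSB hs₁ hs₃) (abs_sub_lt_of_mem hSB hs₂ hs₄)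
      _ ≤ M := by linarith
  exact sub_eq_zero.mp (Int.eq_zero_of_abs_lt_dvd hdvd hlt)

lemma le_abs_mul_add_sub (hSB : ∀ s ∈ S, 0 ≤ s ∧ s < B)
    (hsep : ∀ s ∈ S, ∀ t ∈ S, s ≠ t → d ≤ |s - t|) (hdM : d + B ≤ M)
    {k s t : ℤ} (hs : s ∈ S) (ht : t ∈ S) (hne : M * k + (t - s) ≠ 0) :
    d ≤ |M * k + (t - s)| := by
  rcases eq_or_ne k 0 with rfl | hk
  · rw [mul_zero, zero_add] at hne ⊢
    exact hsep t ht s hs (sub_ne_zero.mp hne)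
  · have htri : |M * k| ≤ |M * k + (t - s)| + |t - s| := by
      simpa using abs_sub (M * k + (t - s)) (t - s)
    linarith [le_abs_mul_of_ne_zero M hk, abs_sub_lt_of_mem hSB ht hs]

lemma le_abs_mul_sub_mul_of_eq (hSB : ∀ s ∈ S, 0 ≤ s ∧ s < B) (hBM : 2 * B ≤ M)
    (hsep : ∀ s ∈ S, ∀ t ∈ S, s ≠ t → d ≤ |s - t|) (hdM : d + B ≤ M)
    {k₁ k₂ k₃ k₄ s t : ℤ} (hs : s ∈ S) (ht : t ∈ S)
    (hsum : M * k₁ + s + (M * k₂ + t) = M * k₃ + s + (M * k₄ + t))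
    (hne : (M * k₁ + s) * (M * k₂ + t) ≠ (M * k₃ + s) * (M * k₄ + t)) :
    M * d ≤ |(M * k₁ + s) * (M * k₂ + t) - (M * k₃ + s) * (M * k₄ + t)| := by
  have hM : 0 ≤ M := by linarith [hSB s hs]
  rw [mul_sub_mul_eq_neg_mul_of_add_eq_add hsum, abs_neg, abs_mul]
  have hx : M * k₃ + s - (M * k₁ + s) = M * (k₃ - k₁) := by ring
  have hy : M * k₄ + t - (M * k₁ + s) = M * (k₄ - k₁) + (t - s) := by ring
  have hxy : (M * (k₃ - k₁)) * (M * (k₄ - k₁) + (t - s)) ≠ 0 := by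
    rw [← hx, ← hy, ← neg_ne_zero, ← mul_sub_mul_eq_neg_mul_of_add_eq_add hsum]
    exact sub_ne_zero.mpr hne
  rw [hx, hy]
  calc M * d ≤ M * |M * (k₄ - k₁) + (t - s)| :=
        mul_le_mul_of_nonneg_left
          (le_abs_mul_add_sub hSB hsep hdM hs ht (right_ne_zero_of_mul hxy)) hM
    _ ≤ |M * (k₃ - k₁)| * |M * (k₄ - k₁) + (t - s)| :=
        mul_le_mul_of_nonneg_right
          (le_abs_mul_of_ne_zero M (right_ne_zero_of_mul (left_ne_zero_of_mul hxy))) (abs_nonneg _)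

theorem IsSidon.le_abs_mul_sub_mul (hS : IsSidon S) (hSB : ∀ s ∈ S, 0 ≤ s ∧ s < B)
    (hBM : 2 * B ≤ M) (hsep : ∀ s ∈ S, ∀ t ∈ S, s ≠ t → d ≤ |s - t|) (hdM : d + B ≤ M)
    {a₁ a₂ a₃ a₄ : ℤ} (h₁ : a₁ ∈ blockUnion M S) (h₂ : a₂ ∈ blockUnion M S)
    (h₃ : a₃ ∈ blockUnion M S) (h₄ : a₄ ∈ blockUnion M S)
    (hsum : a₁ + a₂ = a₃ + a₄) (hne : a₁ * a₂ ≠ a₃ * a₄) :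
    M * d ≤ |a₁ * a₂ - a₃ * a₄| := by
  obtain ⟨k₁, s₁, hs₁, rfl⟩ := h₁
  obtain ⟨k₂, s₂, hs₂, rfl⟩ := h₂
  obtain ⟨k₃, s₃, hs₃, rfl⟩ := h₃
  obtain ⟨k₄, s₄, hs₄, rfl⟩ := h₄
  rcases hS _ hs₁ _ hs₂ _ hs₃ _ hs₄ (add_eq_add_of_mul_add_eq hSB hBM hs₁ hs₂ hs₃ hs₄ hsum)
    with ⟨rfl, rfl⟩ | ⟨rfl, rfl⟩
  · exact le_abs_mul_sub_mul_of_eq hSB hBM hsep hdM hs₁ hs₂ hsum hne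
  · rw [add_comm (M * k₃ + s₂)] at hsum
    rw [mul_comm (M * k₃ + s₂)] at hne ⊢
    exact le_abs_mul_sub_mul_of_eq hSB hBM hsep hdM hs₁ hs₂ hsum hne

end Blocks

lemma eq_or_eq_of_add_eq_add_of_sq_add_sq {R : Type*} [CommRing R] [NoZeroDivisors R]
    (h2 : (2 : R) ≠ 0) {a b c d : R} (h₁ : a + b = c + d) (h₂ : a ^ 2 + b ^ 2 = c ^ 2 + d ^ 2) :
    a = c ∨ a = d := by
  have h : 2 * ((a - c) * (a - d)) = 0 := by linear_combination (a - b - c - d) * h₁ + h₂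
  rcases mul_eq_zero.mp ((mul_eq_zero.mp h).resolve_left h2) with h | h
  · exact Or.inl (sub_eq_zero.mp h)
  · exact Or.inr (sub_eq_zero.mp h)

def erdosTuran (p i : ℕ) : ℕ := 2 * p * i + i ^ 2 % p

section ErdosTuran

variable {p : ℕ}

lemma erdosTuran_lt {i : ℕ} (hi : i < p) : erdosTuran p i < 2 * p ^ 2 := by
  have hr : i ^ 2 % p < p := Nat.mod_lt _ (by omega)
  have : 2 * p * i + p ≤ 2 * p ^ 2 := by nlinarith
  unfold erdosTuran
  omega

lemma erdosTuran_add_le (hp : 0 < p) {i j : ℕ} (hij : i < j) :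
    erdosTuran p i + p ≤ erdosTuran p j := by
  have hr : i ^ 2 % p < p := Nat.mod_lt _ hp
  have : 2 * p * i + 2 * p ≤ 2 * p * j := by
    simpa only [Nat.mul_succ] using Nat.mul_le_mul_left (2 * p) (Nat.succ_le_of_lt hij)
  unfold erdosTuran
  omega

lemma erdosTuran_add_div_mod (hp : 0 < p) (i j : ℕ) :
    (erdosTuran p i + erdosTuran p j) / (2 * p) = i + j ∧
      (erdosTuran p i + erdosTuran p j) % (2 * p) = i ^ 2 % p + j ^ 2 % p := by
  have hr : i ^ 2 % p + j ^ 2 % p < 2 * p := by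
    have := Nat.mod_lt (i ^ 2) hp
    have := Nat.mod_lt (j ^ 2) hp
    omega
  have h : erdosTuran p i + erdosTuran p j = 2 * p * (i + j) + (i ^ 2 % p + j ^ 2 % p) := by
    unfold erdosTuran
    ring
  rw [h, Nat.mul_add_div (by omega), Nat.mul_add_mod, Nat.div_eq_of_lt hr, Nat.mod_eq_of_lt hr]
  exact ⟨rfl, rfl⟩

lemma erdosTuran_add_eq_add (hp : p.Prime) (hp2 : p ≠ 2) {i j i' j' : ℕ}
    (hi : i < p) (hi' : i' < p) (hj' : j' < p)
    (h : erdosTuran p i + erdosTuran p j = erdosTuran p i' + erdosTuran p j') :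
    (i = i' ∧ j = j') ∨ (i = j' ∧ j = i') := by
  have : Fact p.Prime := ⟨hp⟩
  obtain ⟨hdiv, hmod⟩ := erdosTuran_add_div_mod hp.pos i j
  obtain ⟨hdiv', hmod'⟩ := erdosTuran_add_div_mod hp.pos i' j'
  have hsum : i + j = i' + j' := by rw [← hdiv, ← hdiv', h]
  have hres : i ^ 2 % p + j ^ 2 % p = i' ^ 2 % p + j' ^ 2 % p := by rw [← hmod, ← hmod', h]
  have h2 : (2 : ZMod p) ≠ 0 := Ring.two_ne_zero (by rwa [ZMod.ringChar_zmod_n])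
  have hsumZ : (i : ZMod p) + j = i' + j' := by exact_mod_cast congrArg (Nat.cast : ℕ → ZMod p) hsum
  have hsqZ : (i : ZMod p) ^ 2 + j ^ 2 = i' ^ 2 + j' ^ 2 := by
    simpa [ZMod.natCast_mod] using congrArg (Nat.cast : ℕ → ZMod p) hres
  rcases eq_or_eq_of_add_eq_add_of_sq_add_sq h2 hsumZ hsqZ with h | h
  · rw [ZMod.natCast_eq_natCast_iff', Nat.mod_eq_of_lt hi, Nat.mod_eq_of_lt hi'] at h
    omega
  · rw [ZMod.natCast_eq_natCast_iff', Nat.mod_eq_of_lt hi, Nat.mod_eq_of_lt hj'] at h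
    omega

end ErdosTuran

def erdosTuranSet (p : ℕ) : Set ℤ := (fun i : ℕ => (erdosTuran p i : ℤ)) '' Set.Iio p

section ErdosTuranSet

variable {p : ℕ}

lemma isSidon_erdosTuranSet (hp : p.Prime) (hp2 : p ≠ 2) : IsSidon (erdosTuranSet p) := by
  rintro _ ⟨i, hi, rfl⟩ _ ⟨j, -, rfl⟩ _ ⟨i', hi', rfl⟩ _ ⟨j', hj', rfl⟩ h
  dsimp only at h ⊢
  rcases erdosTuran_add_eq_add (j := j) hp hp2 hi hi' hj' (by exact_mod_cast h)
    with ⟨rfl, rfl⟩ | ⟨rfl, rfl⟩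
  · exact Or.inl ⟨rfl, rfl⟩
  · exact Or.inr ⟨rfl, rfl⟩

lemma erdosTuranSet_bounds : ∀ s ∈ erdosTuranSet p, 0 ≤ s ∧ s < 2 * (p : ℤ) ^ 2 := by
  rintro _ ⟨i, hi, rfl⟩
  dsimp only
  exact ⟨by positivity, by exact_mod_cast erdosTuran_lt hi⟩

lemma le_abs_sub_of_mem_erdosTuranSet (hp : 0 < p) :
    ∀ s ∈ erdosTuranSet p, ∀ t ∈ erdosTuranSet p, s ≠ t → (p : ℤ) ≤ |s - t| := by
  rintro _ ⟨i, -, rfl⟩ _ ⟨j, -, rfl⟩ hne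
  rcases lt_or_gt_of_ne (fun h : i = j => hne (h ▸ rfl)) with hij | hij
  · have : (erdosTuran p i + p : ℤ) ≤ erdosTuran p j := by exact_mod_cast erdosTuran_add_le hp hij
    rw [abs_sub_comm, abs_of_nonneg (by linarith)]
    linarith
  · have : (erdosTuran p j + p : ℤ) ≤ erdosTuran p i := by exact_mod_cast erdosTuran_add_le hp hij
    rw [abs_of_nonneg (by linarith)]
    linarith

end ErdosTuranSet

theorem stmt14_general (p : ℕ) (hp : p.Prime) (hodd : Odd p) (m : ℕ) (hm : m = 2 * p ^ 2)
    (S : Finset ℕ) (hS : S = (Finset.range p).image fun i => 2 * p * i + i ^ 2 % p)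
    (n : ℕ) (An : Finset ℕ)
    (hAn : An = (Finset.Icc 1 n).biUnion fun k => S.image fun s => 2 * k * m + s)
    (a₁ a₂ a₃ a₄ : ℕ) (h₁ : a₁ ∈ An) (h₂ : a₂ ∈ An) (h₃ : a₃ ∈ An) (h₄ : a₄ ∈ An)
    (hsum : a₁ + a₂ = a₃ + a₄) (hne : a₁ * a₂ ≠ a₃ * a₄) :
    (4 * p ^ 3 : ℤ) ≤ |(a₁ * a₂ : ℤ) - (a₃ * a₄ : ℤ)| := by
  have hmem : ∀ a ∈ An, (a : ℤ) ∈ blockUnion (4 * p ^ 2) (erdosTuranSet p) := by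
    intro a ha
    simp only [hAn, hS, hm, Finset.mem_biUnion, Finset.mem_image, Finset.mem_range] at ha
    obtain ⟨k, -, _, ⟨i, hi, rfl⟩, rfl⟩ := ha
    exact ⟨k, erdosTuran p i, ⟨i, hi, rfl⟩, by push_cast [erdosTuran]; ring⟩
  have hp2 : p ≠ 2 := by rintro rfl; exact absurd hodd (by decide)
  calc (4 * p ^ 3 : ℤ) = 4 * p ^ 2 * p := by ring
    _ ≤ |(a₁ * a₂ : ℤ) - (a₃ * a₄ : ℤ)| :=
      (isSidon_erdosTuranSet hp hp2).le_abs_mul_sub_mul erdosTuranSet_bounds (by linarith)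
        (le_abs_sub_of_mem_erdosTuranSet hp.pos) (by nlinarith [hp.two_le])
        (hmem a₁ h₁) (hmem a₂ h₂) (hmem a₃ h₃) (hmem a₄ h₄) (by exact_mod_cast hsum)
        (by exact_mod_cast hne)

/-- For an odd prime `p`, `m = 2p²`, `S` the Erdős–Turán Sidon set and
`A_n = ⋃_{k=1}^n (2km + S)`: if `a₁ + a₂ = a₃ + a₄` with all `aᵢ ∈ A_n` and
`a₁a₂ ≠ a₃a₄`, then `|a₁a₂ - a₃a₄| ≥ 4p³`. -/
theorem stmt14 (p : ℕ) (hp : p.Prime) (hodd : Odd p) (m : ℕ) (hm : m = 2 * p ^ 2)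
    (S : Finset ℕ) (hS : S = (Finset.range p).image fun i => 2 * p * i + i ^ 2 % p)
    (n : ℕ) (hn : 1 ≤ n) (An : Finset ℕ)
    (hAn : An = (Finset.Icc 1 n).biUnion fun k => S.image fun s => 2 * k * m + s)
    (a₁ a₂ a₃ a₄ : ℕ) (h₁ : a₁ ∈ An) (h₂ : a₂ ∈ An) (h₃ : a₃ ∈ An) (h₄ : a₄ ∈ An)
    (hsum : a₁ + a₂ = a₃ + a₄) (hne : a₁ * a₂ ≠ a₃ * a₄) :
    (4 * p ^ 3 : ℤ) ≤ |(a₁ * a₂ : ℤ) - (a₃ * a₄ : ℤ)| :=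
  stmt14_general p hp hodd m hm S hS n An hAn a₁ a₂ a₃ a₄ h₁ h₂ h₃ h₄ hsum hne
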